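/- The map rev̄∘π (reverse-complement composed with the adjacent-transposition permutation π) maps the set D_{2n}^{=0}(n) onto itself, and likewise maps D_{2n}^-(n) onto itself. -/
import Mathlib


/-- The number of 1-bits among the first `j` bits of `x`. -/
def prefixOnes {m : ℕ} (x : Fin m → Bool) (j : ℕ) : ℕ :=
  (Finset.univ.filter fun i : Fin m => i.val < j ∧ x i = true).card

/-- `D_{2n}^{=0}(n)`: bitstrings of length `2n` with `n` ones whose lattice path never
moves below the line `y = 0`. -/
def Dzero (n : ℕ) : Finset (Fin (2 * n) → Bool) :=
  Finset.univ.filter fun x =>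
    prefixOnes x (2 * n) = n ∧ ∀ j ≤ 2 * n, j ≤ 2 * prefixOnes x j

/-- `D_{2n}^-(n)`: bitstrings of length `2n` with `n` ones whose lattice path has exactly
one point of the form `(j,-1)` with `1 ≤ j ≤ 2n`. -/
def Dminus (n : ℕ) : Finset (Fin (2 * n) → Bool) :=
  Finset.univ.filter fun x =>
    prefixOnes x (2 * n) = n ∧
    ((Finset.Icc 1 (2 * n)).filter fun j => 2 * prefixOnes x j + 1 = j).card = 1

/-- `revC x` reverses the order of the bits of `x` and complements every bit. -/
def revC {m : ℕ} (x : Fin m → Bool) : Fin m → Bool :=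
  fun i => ! x i.rev

/-- The permutation `π` on bitstrings of length `2n`: all adjacent pairs of bits are
swapped, except that the first and the last bit stay in place. -/
def piMap (n : ℕ) (x : Fin (2 * n) → Bool) : Fin (2 * n) → Bool :=
  fun j =>
    if h : j.val = 0 ∨ j.val = 2 * n - 1 then x j
    else if j.val % 2 = 1 then x ⟨j.val + 1, by have := j.isLt; omega⟩
    else x ⟨j.val - 1, by have := j.isLt; omega⟩

/-- The index permutation underlying `piMap`. -/
def sig {m : ℕ} (j : Fin m) : Fin m :=
  if h : j.val = 0 ∨ j.val = m - 1 then j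
  else if j.val % 2 = 1 then ⟨j.val + 1, by have := j.isLt; omega⟩
  else ⟨j.val - 1, by have := j.isLt; omega⟩

lemma sig_val {m : ℕ} (j : Fin m) :
    (sig j).val = if j.val = 0 ∨ j.val = m - 1 then j.val
      else if j.val % 2 = 1 then j.val + 1 else j.val - 1 := by
  unfold sig; split_ifs <;> rfl

lemma piMap_eq (n : ℕ) (x : Fin (2 * n) → Bool) (j : Fin (2 * n)) :
    piMap n x j = x (sig j) := by
  unfold piMap sig; split_ifs <;> rfl

lemma sig_val_or {m : ℕ} (j : Fin m) :
    ((j.val = 0 ∨ j.val = m - 1) ∧ (sig j).val = j.val) ∨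
    (¬(j.val = 0 ∨ j.val = m - 1) ∧
      ((j.val % 2 = 1 ∧ (sig j).val = j.val + 1) ∨
       (¬ j.val % 2 = 1 ∧ (sig j).val = j.val - 1))) := by
  have h := sig_val j
  split_ifs at h <;> tauto

lemma sig_sig {n : ℕ} (j : Fin (2 * n)) : sig (sig j) = j := by
  have hj := j.isLt
  have h1 := sig_val_or (sig j)
  have h2 := sig_val_or j
  have h3 := (sig j).isLt
  apply Fin.ext
  omega

lemma sig_ge_iff_odd {n : ℕ} (t : ℕ) (ht : t % 2 = 1 ∨ t = 0 ∨ t = 2 * n)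
    (k : Fin (2 * n)) : t ≤ (sig k).val ↔ t ≤ k.val := by
  have hk := k.isLt
  have h1 := sig_val_or k
  have h2 := (sig k).isLt
  omega

lemma sig_ge_iff_even {n : ℕ} (t : ℕ) (ht : t % 2 = 0) (h2 : 2 ≤ t) (h3 : t ≤ 2 * n - 2)
    (k : Fin (2 * n)) : t ≤ (sig k).val ↔ (t + 1 ≤ k.val ∨ k.val = t - 1) := by
  have hk := k.isLt
  have h1 := sig_val_or k
  have h2' := (sig k).isLt
  omega

lemma prefixOnes_zero {m : ℕ} (x : Fin m → Bool) : prefixOnes x 0 = 0 := by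
  simp [prefixOnes]

lemma card_val_lt {m t : ℕ} (ht : t ≤ m) :
    (Finset.univ.filter fun k : Fin m => k.val < t).card = t := by
  have huniv : (Finset.univ : Finset (Fin t)).card = t := by simp
  conv_rhs => rw [← huniv]
  refine Finset.card_bij' (fun (k : Fin m) hk =>
      (⟨k.val, (Finset.mem_filter.mp hk).2⟩ : Fin t))
    (fun (a : Fin t) _ => (⟨a.val, lt_of_lt_of_le a.isLt ht⟩ : Fin m))
    (fun a ha => Finset.mem_univ _)
    (fun a ha => Finset.mem_filter.mpr ⟨Finset.mem_univ _, a.isLt⟩)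
    (fun a ha => rfl) (fun a ha => rfl)

lemma card_lt_split {m : ℕ} (x : Fin m → Bool) (t : ℕ) (ht : t ≤ m) :
    prefixOnes x t
      + (Finset.univ.filter fun k : Fin m => k.val < t ∧ x k = false).card = t := by
  classical
  have key := Finset.card_filter_add_card_filter_not
    (s := Finset.univ.filter fun k : Fin m => k.val < t) (p := fun k => x k = true)
  have e1 : (Finset.univ.filter fun k : Fin m => k.val < t).filter (fun k => x k = true)
      = Finset.univ.filter fun k : Fin m => k.val < t ∧ x k = true := by
    rw [Finset.filter_filter]
  have e2 : (Finset.univ.filter fun k : Fin m => k.val < t).filter (fun k => ¬ x k = true)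
      = Finset.univ.filter fun k : Fin m => k.val < t ∧ x k = false := by
    rw [Finset.filter_filter]
    apply Finset.filter_congr
    intro k _; simp
  rw [e1, e2, card_val_lt ht] at key
  exact key

lemma card_ge_false {m nn : ℕ} (x : Fin m → Bool) (hx : prefixOnes x m = nn) (t : ℕ)
    (ht : t ≤ m) :
    (Finset.univ.filter fun k : Fin m => t ≤ k.val ∧ x k = false).card + t
      = (m - nn) + prefixOnes x t := by
  classical
  have hm := card_lt_split x m le_rfl
  have hZ : (Finset.univ.filter fun k : Fin m => k.val < m ∧ x k = false)
      = Finset.univ.filter fun k : Fin m => x k = false := by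
    apply Finset.filter_congr
    intro k _; simp [k.isLt]
  rw [hZ, hx] at hm
  have ht' := card_lt_split x t ht
  have key := Finset.card_filter_add_card_filter_not
    (s := Finset.univ.filter fun k : Fin m => x k = false) (p := fun k => t ≤ k.val)
  have e1 : (Finset.univ.filter fun k : Fin m => x k = false).filter (fun k => t ≤ k.val)
      = Finset.univ.filter fun k : Fin m => t ≤ k.val ∧ x k = false := by
    rw [Finset.filter_filter]
    apply Finset.filter_congr
    intro k _; exact and_comm
  have e2 : (Finset.univ.filter fun k : Fin m => x k = false).filter (fun k => ¬ t ≤ k.val)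
      = Finset.univ.filter fun k : Fin m => k.val < t ∧ x k = false := by
    rw [Finset.filter_filter]
    apply Finset.filter_congr
    intro k _; rw [Nat.not_le]; exact and_comm
  rw [e1, e2] at key
  omega

lemma prefix_y {n : ℕ} (x : Fin (2 * n) → Bool) (j : ℕ) :
    prefixOnes (revC (piMap n x)) j
      = (Finset.univ.filter fun k : Fin (2 * n) =>
          2 * n - j ≤ (sig k).val ∧ x k = false).card := by
  classical
  have hrw : (Finset.univ.filter fun i : Fin (2 * n) =>
        i.val < j ∧ revC (piMap n x) i = true)
      = Finset.univ.filter fun i : Fin (2 * n) =>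
        i.val < j ∧ x (sig i.rev) = false := by
    apply Finset.filter_congr
    intro i _
    simp [revC, piMap_eq]
  rw [prefixOnes, hrw]
  apply Finset.card_bij' (i := fun (i : Fin (2 * n)) _ => sig i.rev)
    (j := fun (k : Fin (2 * n)) _ => (sig k).rev)
  · intro i hi
    simp only [Finset.mem_filter, Finset.mem_univ, true_and] at hi ⊢
    refine ⟨?_, hi.2⟩
    have h1 : (sig (sig i.rev)).val = i.rev.val := by rw [sig_sig]
    have h2 : i.rev.val = 2 * n - (i.val + 1) := by simp [Fin.val_rev]
    have := i.isLt
    omega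
  · intro k hk
    simp only [Finset.mem_filter, Finset.mem_univ, true_and] at hk ⊢
    have h2 : (sig k).rev.val = 2 * n - ((sig k).val + 1) := by simp [Fin.val_rev]
    have h3 := (sig k).isLt
    have h4 : sig ((sig k).rev.rev) = k := by rw [Fin.rev_rev, sig_sig]
    refine ⟨by omega, ?_⟩
    rw [h4]; exact hk.2
  · intro i _
    rw [sig_sig, Fin.rev_rev]
  · intro k _
    rw [Fin.rev_rev, sig_sig]

lemma prefA {n : ℕ} (x : Fin (2 * n) → Bool) (hx : prefixOnes x (2 * n) = n) (j : ℕ)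
    (hj : j ≤ 2 * n) (hodd : j % 2 = 1 ∨ j = 0 ∨ j = 2 * n) :
    prefixOnes (revC (piMap n x)) j + (2 * n - j) = n + prefixOnes x (2 * n - j) := by
  rw [prefix_y]
  have hset : (Finset.univ.filter fun k : Fin (2 * n) =>
        2 * n - j ≤ (sig k).val ∧ x k = false)
      = Finset.univ.filter fun k : Fin (2 * n) => 2 * n - j ≤ k.val ∧ x k = false := by
    apply Finset.filter_congr
    intro k _
    rw [sig_ge_iff_odd (2 * n - j) (by omega)]
  rw [hset]
  have h := card_ge_false x hx (2 * n - j) (by omega)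
  omega

lemma prefB {n : ℕ} (x : Fin (2 * n) → Bool) (hx : prefixOnes x (2 * n) = n) (j : ℕ)
    (h1 : 0 < j) (h2 : j < 2 * n) (he : j % 2 = 0) :
    prefixOnes (revC (piMap n x)) j + (2 * n - j + 1)
      = n + prefixOnes x (2 * n - j + 1)
        + (Finset.univ.filter fun k : Fin (2 * n) =>
            k.val = 2 * n - j - 1 ∧ x k = false).card := by
  classical
  rw [prefix_y]
  have hset : (Finset.univ.filter fun k : Fin (2 * n) =>
        2 * n - j ≤ (sig k).val ∧ x k = false)
      = (Finset.univ.filter fun k : Fin (2 * n) => 2 * n - j + 1 ≤ k.val ∧ x k = false)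
        ∪ (Finset.univ.filter fun k : Fin (2 * n) =>
            k.val = 2 * n - j - 1 ∧ x k = false) := by
    ext k
    simp only [Finset.mem_filter, Finset.mem_univ, true_and, Finset.mem_union]
    rw [sig_ge_iff_even (2 * n - j) (by omega) (by omega) (by omega)]
    constructor
    · rintro ⟨h | h, hz⟩
      · exact Or.inl ⟨h, hz⟩
      · exact Or.inr ⟨by omega, hz⟩
    · rintro (⟨h, hz⟩ | ⟨h, hz⟩)
      · exact ⟨Or.inl h, hz⟩
      · exact ⟨Or.inr (by omega), hz⟩
  have hdis : Disjoint
      (Finset.univ.filter fun k : Fin (2 * n) => 2 * n - j + 1 ≤ k.val ∧ x k = false)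
      (Finset.univ.filter fun k : Fin (2 * n) =>
          k.val = 2 * n - j - 1 ∧ x k = false) := by
    rw [Finset.disjoint_left]
    intro k hk hk'
    simp only [Finset.mem_filter, Finset.mem_univ, true_and] at hk hk'
    omega
  rw [hset, Finset.card_union_of_disjoint hdis]
  have h := card_ge_false x hx (2 * n - j + 1) (by omega)
  omega

lemma prefTotal {n : ℕ} (x : Fin (2 * n) → Bool) (hx : prefixOnes x (2 * n) = n) :
    prefixOnes (revC (piMap n x)) (2 * n) = n := by
  have h := prefA x hx (2 * n) le_rfl (Or.inr (Or.inr rfl))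
  rw [Nat.sub_self, prefixOnes_zero] at h
  omega

lemma mem_Dzero {n : ℕ} (x : Fin (2 * n) → Bool) (hx : x ∈ Dzero n) :
    revC (piMap n x) ∈ Dzero n := by
  simp only [Dzero, Finset.mem_filter, Finset.mem_univ, true_and] at hx ⊢
  obtain ⟨hsum, hpath⟩ := hx
  refine ⟨prefTotal x hsum, ?_⟩
  intro j hj
  by_cases hcase : j % 2 = 1 ∨ j = 0 ∨ j = 2 * n
  · have hA := prefA x hsum j hj hcase
    have hx2 := hpath (2 * n - j) (by omega)
    omega
  · push_neg at hcase
    have hB := prefB x hsum j (by omega) (by omega) (by omega)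
    have hx2 := hpath (2 * n - j + 1) (by omega)
    omega

lemma mem_Dminus {n : ℕ} (x : Fin (2 * n) → Bool) (hx : x ∈ Dminus n) :
    revC (piMap n x) ∈ Dminus n := by
  simp only [Dminus, Finset.mem_filter, Finset.mem_univ, true_and] at hx ⊢
  obtain ⟨hsum, hcard⟩ := hx
  refine ⟨prefTotal x hsum, ?_⟩
  rw [← hcard]
  apply Finset.card_bij (i := fun j _ => 2 * n - j)
  · intro j hj
    simp only [Finset.mem_filter, Finset.mem_Icc] at hj ⊢
    obtain ⟨⟨hj1, hj2⟩, hj3⟩ := hj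
    have hoddj : j % 2 = 1 := by omega
    have hA := prefA x hsum j hj2 (Or.inl hoddj)
    constructor
    · omega
    · omega
  · intro j1 h1 j2 h2 heq
    simp only [Finset.mem_filter, Finset.mem_Icc] at h1 h2
    omega
  · intro b hb
    simp only [Finset.mem_filter, Finset.mem_Icc] at hb
    obtain ⟨⟨hb1, hb2⟩, hb3⟩ := hb
    have hoddb : b % 2 = 1 := by omega
    refine ⟨2 * n - b, ?_, by omega⟩
    simp only [Finset.mem_filter, Finset.mem_Icc]
    have hA := prefA x hsum (2 * n - b) (by omega) (Or.inl (by omega))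
    have hbb : 2 * n - (2 * n - b) = b := by omega
    rw [hbb] at hA
    exact ⟨⟨by omega, by omega⟩, by omega⟩

lemma map_inj (n : ℕ) :
    Function.Injective (fun x : Fin (2 * n) → Bool => revC (piMap n x)) := by
  intro a b h
  funext k
  have hk := congrFun h ((sig k).rev)
  simp only [revC, piMap_eq, Fin.rev_rev, sig_sig] at hk
  simpa using hk

/-- The map `rev̄ ∘ π` maps `D_{2n}^{=0}(n)` onto itself and maps `D_{2n}^-(n)` onto
itself. -/
theorem revC_piMap_maps_D_onto (n : ℕ) (hn : 1 ≤ n) :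
    (Dzero n).image (fun x => revC (piMap n x)) = Dzero n ∧
    (Dminus n).image (fun x => revC (piMap n x)) = Dminus n := by
  constructor
  · apply Finset.eq_of_subset_of_card_le
    · intro y hy
      obtain ⟨x, hx, rfl⟩ := Finset.mem_image.mp hy
      exact mem_Dzero x hx
    · rw [Finset.card_image_of_injective _ (map_inj n)]
  · apply Finset.eq_of_subset_of_card_le
    · intro y hy
      obtain ⟨x, hx, rfl⟩ := Finset.mem_image.mp hy
      exact mem_Dminus x hx
    · rw [Finset.card_image_of_injective _ (map_inj n)]
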